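/- Correctness of asynchronous FloodSet (zero present, guaranteed delivery): consider a run of the FloodSet global machine of dimension n satisfying the guarantee-of-delivery property (if any automaton broadcasts message a at step i, then every automaton k performs the reaction ā at some step l ≥ i). If some automaton broadcasts 0 at some step, then eventually every automaton is in state o₀ and remains there forever. -/

import Mathlib

/-- States of the FloodSet protocol. -/
inductive FState where
  | i0 | i1 | o0 | o1
deriving DecidableEq

/-- Actions: broadcasts `b0, b1` (messages 0,1) and reactions `r0, r1` (0̄, 1̄). -/
inductive FAct where
  | b0 | b1 | r0 | r1
deriving DecidableEq

/-- The FloodSet transition relation. -/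
def ftau (q : FState) (a : FAct) (r : FState) : Prop :=
  (q = .i0 ∧ a = .b0 ∧ r = .o0) ∨
  (q = .o0 ∧ a = .r0 ∧ r = .o0) ∨
  (q = .o0 ∧ a = .r1 ∧ r = .o0) ∨
  (q = .i1 ∧ a = .b1 ∧ r = .o1) ∨
  (q = .o1 ∧ a = .r0 ∧ r = .o0) ∨
  (q = .o1 ∧ a = .r1 ∧ r = .o1)

/-!
The state `o₀` is absorbing: every transition out of `o₀` returns to `o₀`. The reaction `0̄`
leads to `o₀` from every state in which it is enabled, and by guarantee of delivery the broadcast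
of `0` makes each of the finitely many automata perform `0̄` at some step; after that step it
stays in `o₀` forever.
-/

section Run

variable {Q A ι : Type*}

def IsRun (τ : Q → A → Q → Prop) (s : ℕ → ι → Q) (σ : ℕ → ι → Option A) : Prop :=
  ∀ i j, (∀ a, σ i j = some a → τ (s i j) a (s (i + 1) j)) ∧ (σ i j = none → s i j = s (i + 1) j)

def IsAbsorbing (τ : Q → A → Q → Prop) (q : Q) : Prop :=
  ∀ a r, τ q a r → r = q

variable {τ : Q → A → Q → Prop} {s : ℕ → ι → Q} {σ : ℕ → ι → Option A}

theorem IsRun.eq_succ_of_action {a : A} {q : Q} (hrun : IsRun τ s σ)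
    (ha : ∀ p r, τ p a r → r = q) {i : ℕ} {k : ι} (hσ : σ i k = some a) : s (i + 1) k = q :=
  ha _ _ ((hrun i k).1 a hσ)

theorem IsRun.eq_of_le {q : Q} (hrun : IsRun τ s σ) (hq : IsAbsorbing τ q) {k : ι} {m m' : ℕ}
    (hm : s m k = q) (hle : m ≤ m') : s m' k = q := by
  induction m', hle using Nat.le_induction with
  | base => exact hm
  | succ m' _ ih =>
    cases hσ : σ m' k with
    | none => rw [← (hrun m' k).2 hσ, ih]
    | some a => exact hq a _ (ih ▸ (hrun m' k).1 a hσ)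

theorem IsRun.eventually_forall_eq [Finite ι] {q : Q} (hrun : IsRun τ s σ)
    (hq : IsAbsorbing τ q) (hreach : ∀ k, ∃ m, s m k = q) :
    ∃ t, ∀ l, t ≤ l → ∀ k, s l k = q := by
  have hk : ∀ k, ∀ᶠ l in Filter.atTop, s l k = q := fun k ↦
    let ⟨m, hm⟩ := hreach k
    Filter.eventually_atTop.2 ⟨m, fun _ ↦ hrun.eq_of_le hq hm⟩
  exact Filter.eventually_atTop.1 (Filter.eventually_all.2 hk)

end Run

theorem isAbsorbing_ftau_o0 : IsAbsorbing ftau .o0 := by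
  intro a r h
  rcases h with ⟨h, -⟩ | ⟨-, -, h⟩ | ⟨-, -, h⟩ | ⟨h, -⟩ | ⟨h, -⟩ | ⟨h, -⟩ <;> first | exact h | cases h

theorem ftau_r0_eq_o0 (q r : FState) (h : ftau q .r0 r) : r = .o0 := by
  rcases h with ⟨-, h, -⟩ | ⟨-, -, h⟩ | ⟨-, h, -⟩ | ⟨-, h, -⟩ | ⟨-, -, h⟩ | ⟨-, h, -⟩ <;>
    first | exact h | cases h

theorem stmt_12_general (n : ℕ)
    (s : ℕ → Fin n → FState) (σ : ℕ → Fin n → Option FAct)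
    (hrun : ∀ i j, (∀ a, σ i j = some a → ftau (s i j) a (s (i + 1) j)) ∧
      (σ i j = none → s i j = s (i + 1) j))
    (hdeliver0 : ∀ i j, σ i j = some .b0 → ∀ k, ∃ l, i ≤ l ∧ σ l k = some .r0)
    (hsent : ∃ i j, σ i j = some .b0) :
    ∃ t, ∀ l, t ≤ l → ∀ j, s l j = .o0 := by
  obtain ⟨i, j, hij⟩ := hsent
  refine IsRun.eventually_forall_eq hrun isAbsorbing_ftau_o0 fun k ↦ ?_
  obtain ⟨l, -, hl⟩ := hdeliver0 i j hij k
  exact ⟨l + 1, IsRun.eq_succ_of_action hrun ftau_r0_eq_o0 hl⟩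

/-- correctness of asynchronous FloodSet with guaranteed delivery:
in a run satisfying guarantee of delivery (if any automaton broadcasts message
`a` at step `i`, then every automaton `k` performs the reaction `ā` at some step
`l ≥ i`), if some automaton broadcasts 0, then eventually every automaton is in
state `o₀` and remains there forever. -/
theorem stmt_12 (n : ℕ)
    (s : ℕ → Fin n → FState) (σ : ℕ → Fin n → Option FAct)
    (hrun : ∀ i j, (∀ a, σ i j = some a → ftau (s i j) a (s (i + 1) j)) ∧
      (σ i j = none → s i j = s (i + 1) j))
    (hdeliver0 : ∀ i j, σ i j = some .b0 → ∀ k, ∃ l, i ≤ l ∧ σ l k = some .r0)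
    (hdeliver1 : ∀ i j, σ i j = some .b1 → ∀ k, ∃ l, i ≤ l ∧ σ l k = some .r1)
    (hsent : ∃ i j, σ i j = some .b0) :
    ∃ t, ∀ l, t ≤ l → ∀ j, s l j = .o0 :=
  stmt_12_general n s σ hrun hdeliver0 hsent
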